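/- Assume ∫_G δ_λ(g)⁴ dπ(g) < ∞, ∫_G c(g)^{1/2} δ_λ(g)⁴ dπ(g) < ∞ and ∫_G c(g) δ_λ(g)² dπ(g) < ∞. Then there exists a constant E₀ > 0 such that for every f ∈ L₁ and every t ∈ ℝ: ‖Q(t)f − Qf‖₃ ≤ E₀ |t| ‖f‖₁. -/

import Mathlib

/-!
Since `(Q(t) - Q) f (x) = ∫ (e^{i t ξ(g x)} - 1) f(g x) dπ(g)`, it suffices to bound the integrand
for each `g` and integrate, using `|e^{iθ} - 1| ≤ |θ|` and `|e^{iθ} - e^{iφ}| ≤ |θ - φ|`. Everything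
is controlled by the weight `p = p_λ`: `p(g x) ≤ δ(g) p(x)`, `|ξ| ≤ K p²`,
`d(x, y)^{1/2} ≤ (2/λ) p(x) p(y)`, and for `f ∈ L₁` also `|f| ≤ ‖f‖₁ p²` and
`|f(x) - f(y)| ≤ ‖f‖₁ d(x, y)^{1/2} p(x) p(y)`. This bounds the integrand by a multiple of
`|t| ‖f‖₁ p(x)⁴ δ(g)⁴`; after splitting
`(e_x - 1) f(g x) - (e_y - 1) f(g y) = (e_x - 1) (f(g x) - f(g y)) + (e_x - e_y) f(g y)`, the
difference of two integrands is bounded by a multiple of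
`|t| ‖f‖₁ d(x, y)^{1/2} p(x)³ p(y)³ (c(g)^{1/2} δ(g)⁴ + c(g) δ(g)²)`. The moment hypotheses make
both bounds integrable in `g`.
-/

open MeasureTheory ENNReal

section ComplexExponential
open Complex

lemma norm_cexp_sub_one_mul_le (t u : ℝ) (a : ℂ) :
    ‖(exp (I * t * u) - 1) * a‖ ≤ |t| * |u| * ‖a‖ := by
  rw [norm_mul, show I * t * u = I * ↑(t * u) by push_cast; ring, ← abs_mul, ← Real.norm_eq_abs]
  gcongr
  exact Real.norm_exp_I_mul_ofReal_sub_one_le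

lemma norm_cexp_sub_cexp_le (t u v : ℝ) :
    ‖exp (I * t * u) - exp (I * t * v)‖ ≤ |t| * |u - v| := by
  have h : exp (I * t * u) - exp (I * t * v)
      = exp (I * ↑(t * v)) * (exp (I * ↑(t * (u - v))) - 1) := by
    rw [mul_sub, mul_one, ← exp_add]; push_cast; ring_nf
  rw [h, norm_mul, norm_exp_I_mul_ofReal, one_mul, ← abs_mul, ← Real.norm_eq_abs]
  exact Real.norm_exp_I_mul_ofReal_sub_one_le

lemma norm_cexp_sub_one_mul_sub_le (t u v : ℝ) (a b : ℂ) :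
    ‖(exp (I * t * u) - 1) * a - (exp (I * t * v) - 1) * b‖
      ≤ |t| * (|u| * ‖a - b‖ + |u - v| * ‖b‖) := by
  have h : (exp (I * t * u) - 1) * a - (exp (I * t * v) - 1) * b
      = (exp (I * t * u) - 1) * (a - b) + (exp (I * t * u) - exp (I * t * v)) * b := by ring
  rw [h, mul_add, ← mul_assoc, ← mul_assoc]
  refine (norm_add_le _ _).trans (add_le_add (norm_cexp_sub_one_mul_le t u _) ?_)
  rw [norm_mul]
  gcongr
  exact norm_cexp_sub_cexp_le t u v

end ComplexExponential

section WeightedQuotient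
variable {F : Type*} [SeminormedAddCommGroup F]

lemma enorm_div_ofReal_le_ofReal {a : F} {w K : ℝ} (hK : 0 ≤ K) (h : ‖a‖ ≤ K * w) :
    (‖a‖₊ : ℝ≥0∞) / ENNReal.ofReal w ≤ ENNReal.ofReal K := by
  refine ENNReal.div_le_of_le_mul ?_
  rw [← ENNReal.ofReal_mul hK, ← enorm_eq_nnnorm, ← ofReal_norm]
  exact ENNReal.ofReal_le_ofReal h

lemma norm_le_toReal_mul_of_enorm_div_le {a : F} {w : ℝ} {S : ℝ≥0∞} (hS : S ≠ ⊤) (hw : 0 ≤ w)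
    (h : (‖a‖₊ : ℝ≥0∞) / ENNReal.ofReal w ≤ S) : ‖a‖ ≤ S.toReal * w := by
  rw [ENNReal.div_le_iff_le_mul (Or.inr hS) (Or.inl ENNReal.ofReal_ne_top)] at h
  simpa [ENNReal.toReal_mul, hw] using ENNReal.toReal_mono (mul_ne_top hS ofReal_ne_top) h

lemma iSup₂_add_iSup_enorm_div_ofReal_le {ι : Type*} {D : ι → F} {w₁ : ι → ℝ}
    {w₂ : ι → ι → ℝ} {a b : ℝ} (ha : 0 ≤ a) (hb : 0 ≤ b)
    (h₂ : ∀ x y, ‖D x - D y‖ ≤ a * w₂ x y) (h₁ : ∀ x, ‖D x‖ ≤ b * w₁ x) :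
    (⨆ (x) (y), (‖D x - D y‖₊ : ℝ≥0∞) / ENNReal.ofReal (w₂ x y))
        + ⨆ x, (‖D x‖₊ : ℝ≥0∞) / ENNReal.ofReal (w₁ x)
      ≤ ENNReal.ofReal (a + b) := by
  rw [ENNReal.ofReal_add ha hb]
  exact add_le_add (iSup₂_le fun x y => enorm_div_ofReal_le_ofReal ha (h₂ x y))
    (iSup_le fun x => enorm_div_ofReal_le_ofReal hb (h₁ x))

end WeightedQuotient

lemma le_ofReal_mul_add {X a b : ℝ≥0∞} {s : ℝ} (hs : 0 < s)
    (h : a ≠ ⊤ → b ≠ ⊤ → X ≤ ENNReal.ofReal (s * (a.toReal + b.toReal))) :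
    X ≤ ENNReal.ofReal s * (a + b) := by
  rcases eq_or_ne (a + b) ⊤ with hab | hab
  · rw [hab, ENNReal.mul_top (ENNReal.ofReal_pos.2 hs).ne']
    exact le_top
  obtain ⟨ha, hb⟩ := ENNReal.add_ne_top.1 hab
  refine (h ha hb).trans_eq ?_
  rw [ofReal_mul hs.le, ofReal_add toReal_nonneg toReal_nonneg, ofReal_toReal ha, ofReal_toReal hb]

lemma Real.sqrt_add_le_add_sqrt {a b : ℝ} (ha : 0 ≤ a) (hb : 0 ≤ b) : √(a + b) ≤ √a + √b := by
  rw [Real.sqrt_le_left (by positivity)]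
  nlinarith [Real.sq_sqrt ha, Real.sq_sqrt hb, Real.sqrt_nonneg a, Real.sqrt_nonneg b]

section SqrtWeight
variable {E : Type*} [PseudoMetricSpace E] {lam : ℝ}

noncomputable def sqrtWeight (lam : ℝ) (x₀ x : E) : ℝ := 1 + lam * √(dist x x₀)

lemma one_le_sqrtWeight (hlam : 0 ≤ lam) (x₀ x : E) : 1 ≤ sqrtWeight lam x₀ x :=
  le_add_of_nonneg_right (by positivity)

lemma continuous_sqrtWeight (lam : ℝ) (x₀ : E) : Continuous (sqrtWeight lam x₀) := by
  unfold sqrtWeight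
  fun_prop

lemma sqrtWeight_map_le {φ : E → E} {c : ℝ} (hc : 0 ≤ c) (hlam : 0 ≤ lam)
    (hφ : ∀ x y, dist (φ x) (φ y) ≤ c * dist x y) (x₀ x : E) :
    sqrtWeight lam x₀ (φ x)
      ≤ (√(max c 1) + lam * √(dist (φ x₀) x₀)) * sqrtWeight lam x₀ x := by
  have hsqrt : √(dist (φ x) x₀) ≤ √c * √(dist x x₀) + √(dist (φ x₀) x₀) := by
    rw [← Real.sqrt_mul hc]
    refine (Real.sqrt_le_sqrt ?_).trans (Real.sqrt_add_le_add_sqrt (by positivity) dist_nonneg)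
    linarith [dist_triangle (φ x) (φ x₀) x₀, hφ x x₀]
  have hc_le : √c ≤ √(max c 1) := Real.sqrt_le_sqrt (le_max_left c 1)
  have hone_le : 1 ≤ √(max c 1) := Real.one_le_sqrt.2 (le_max_right c 1)
  have hx := Real.sqrt_nonneg (dist x x₀)
  have hφx₀ := Real.sqrt_nonneg (dist (φ x₀) x₀)
  unfold sqrtWeight
  nlinarith [mul_le_mul_of_nonneg_left hsqrt hlam, mul_nonneg (mul_nonneg hlam hlam)
    (mul_nonneg hx hφx₀), mul_le_mul_of_nonneg_right hc_le (mul_nonneg hlam hx)]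

lemma sqrt_dist_le_mul_sqrtWeight (hlam : 0 < lam) (x₀ x y : E) :
    √(dist x y) ≤ 2 / lam * (sqrtWeight lam x₀ x * sqrtWeight lam x₀ y) := by
  have hsqrt : √(dist x y) ≤ √(dist x x₀) + √(dist y x₀) :=
    (Real.sqrt_le_sqrt (dist_triangle_right x y x₀)).trans
      (Real.sqrt_add_le_add_sqrt dist_nonneg dist_nonneg)
  have hx := Real.sqrt_nonneg (dist x x₀)
  have hy := Real.sqrt_nonneg (dist y x₀)
  rw [sqrtWeight, sqrtWeight, div_mul_eq_mul_div, le_div_iff₀ hlam]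
  nlinarith [mul_le_mul_of_nonneg_right hsqrt hlam.le,
    mul_nonneg (mul_nonneg hlam.le hlam.le) (mul_nonneg hx hy)]

lemma abs_le_mul_sqrtWeight_sq {ξ : E → ℝ} {C : ℝ} (hC : 0 ≤ C) (hlam : 0 < lam)
    (hξ : ∀ x y, |ξ x - ξ y| ≤ C * dist x y) (x₀ x : E) :
    |ξ x| ≤ (|ξ x₀| + C / lam ^ 2) * sqrtWeight lam x₀ x ^ 2 := by
  have hdist : lam ^ 2 * dist x x₀ ≤ sqrtWeight lam x₀ x ^ 2 := by
    have := Real.sq_sqrt (dist_nonneg (x := x) (y := x₀))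
    have := Real.sqrt_nonneg (dist x x₀)
    unfold sqrtWeight
    nlinarith [mul_nonneg hlam.le (Real.sqrt_nonneg (dist x x₀))]
  have hone : 1 ≤ sqrtWeight lam x₀ x ^ 2 := one_le_pow₀ (one_le_sqrtWeight hlam.le x₀ x)
  calc |ξ x| ≤ |ξ x₀| + C / lam ^ 2 * (lam ^ 2 * dist x x₀) := by
        rw [show C / lam ^ 2 * (lam ^ 2 * dist x x₀) = C * dist x x₀ by field_simp]
        linarith [abs_sub_abs_le_abs_sub (ξ x) (ξ x₀), hξ x x₀]
    _ ≤ |ξ x₀| * sqrtWeight lam x₀ x ^ 2 + C / lam ^ 2 * sqrtWeight lam x₀ x ^ 2 := by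
        gcongr
        exact le_mul_of_one_le_right (abs_nonneg _) hone
    _ = _ := by ring

end SqrtWeight

lemma continuous_of_norm_sub_le_mul_sqrt_dist {E F : Type*} [PseudoMetricSpace E]
    [SeminormedAddCommGroup F] {f : E → F} {p : E → ℝ} {M : ℝ} (hp : Continuous p)
    (hf : ∀ x y, ‖f x - f y‖ ≤ M * (√(dist x y) * p x * p y)) : Continuous f := by
  refine continuous_iff_continuousAt.2 fun x => tendsto_iff_norm_sub_tendsto_zero.2 ?_
  refine squeeze_zero (fun y => norm_nonneg _) (fun y => hf y x) ?_
  have : Continuous fun y => M * (√(dist y x) * p y * p x) := by fun_prop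
  simpa using this.tendsto x

section Pointwise
open Complex
variable {E G : Type*} [PseudoMetricSpace E] {act : G → E → E} {ξ : E → ℝ} {f : E → ℂ}
  {p : E → ℝ} {c δ : G → ℝ} {K L A M N : ℝ}

lemma norm_cexp_sub_one_mul_comp_sub_le (hK : 0 ≤ K) (hL : 0 ≤ L) (hA : 0 ≤ A) (hM : 0 ≤ M)
    (hN : 0 ≤ N) (hp : ∀ x, 1 ≤ p x) (hc : ∀ g, 0 ≤ c g)
    (hcLip : ∀ g x y, dist (act g x) (act g y) ≤ c g * dist x y)
    (hpact : ∀ g x, p (act g x) ≤ δ g * p x) (hξ : ∀ x, |ξ x| ≤ K * p x ^ 2)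
    (hξLip : ∀ x y, |ξ x - ξ y| ≤ L * dist x y) (hfI : ∀ x, ‖f x‖ ≤ N * p x ^ 2)
    (hfM : ∀ x y, ‖f x - f y‖ ≤ M * (√(dist x y) * p x * p y))
    (hdist : ∀ x y, √(dist x y) ≤ A * (p x * p y)) (t : ℝ) (g : G) (x y : E) :
    ‖(exp (I * t * ξ (act g x)) - 1) * f (act g x) - (exp (I * t * ξ (act g y)) - 1) * f (act g y)‖
      ≤ |t| * (M + N) * (√(dist x y) * p x ^ 3 * p y ^ 3)
        * (K * (√(c g) * δ g ^ 4) + L * A * (c g * δ g ^ 2)) := by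
  have hp0 (x : E) : 0 ≤ p x := zero_le_one.trans (hp x)
  have := hp0 (act g x); have := hp0 (act g y); have := hp0 x; have := hp0 y
  have hpgx := hpact g x; have hpgy := hpact g y
  have hcg := hc g
  have hδg : 0 ≤ δ g := by nlinarith [hp x]
  have hsqrt : √(dist (act g x) (act g y)) ≤ √(c g) * √(dist x y) :=
    (Real.sqrt_le_sqrt (hcLip g x y)).trans_eq (Real.sqrt_mul hcg _)
  have hdist' : dist (act g x) (act g y) ≤ c g * √(dist x y) * (A * (p x * p y)) := by
    calc _ ≤ c g * dist x y := hcLip g x y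
      _ = c g * √(dist x y) * √(dist x y) := by rw [mul_assoc, Real.mul_self_sqrt dist_nonneg]
      _ ≤ _ := by gcongr; exact hdist x y
  have hx3 : p x ≤ p x ^ 3 := le_self_pow₀ (hp x) (by norm_num)
  have hy3 : p y ≤ p y ^ 3 := le_self_pow₀ (hp y) (by norm_num)
  calc _ ≤ |t| * (|ξ (act g x)| * ‖f (act g x) - f (act g y)‖
          + |ξ (act g x) - ξ (act g y)| * ‖f (act g y)‖) := norm_cexp_sub_one_mul_sub_le _ _ _ _ _
    _ ≤ |t| * (K * (δ g * p x) ^ 2 * (M * (√(c g) * √(dist x y) * (δ g * p x) * (δ g * p y)))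
          + L * (c g * √(dist x y) * (A * (p x * p y))) * (N * (δ g * p y) ^ 2)) := by
        gcongr
        · exact (hξ _).trans (by gcongr)
        · exact (hfM _ _).trans (by gcongr)
        · exact (hξLip _ _).trans (by gcongr)
        · exact (hfI _).trans (by gcongr)
    _ = |t| * √(dist x y) * (K * M * √(c g) * δ g ^ 4 * (p x ^ 3 * p y)
          + L * A * N * c g * δ g ^ 2 * (p x * p y ^ 3)) := by ring
    _ ≤ |t| * √(dist x y) * (K * (M + N) * √(c g) * δ g ^ 4 * (p x ^ 3 * p y ^ 3)
          + L * A * (M + N) * c g * δ g ^ 2 * (p x ^ 3 * p y ^ 3)) := by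
        gcongr <;> linarith
    _ = _ := by ring

end Pointwise

section Integral
open Complex
variable {E G : Type*} [MeasurableSpace G] {μ : Measure G} {act : G → E → E} {ξ : E → ℝ}
  {f : E → ℂ} {p : E → ℝ} {c δ : G → ℝ} {K L A M N : ℝ}

lemma MeasureTheory.Integrable.cexp_sub_one_mul {u : G → ℝ} {F : G → ℂ} (hF : Integrable F μ)
    (hu : Measurable u) (t : ℝ) : Integrable (fun g => (exp (I * t * u g) - 1) * F g) μ := by
  refine hF.bdd_mul (c := 2) (by fun_prop) (ae_of_all _ fun g => ?_)
  refine (norm_sub_le _ _).trans ?_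
  rw [mul_assoc, ← Complex.ofReal_mul, norm_exp_I_mul_ofReal, norm_one]
  norm_num

lemma integral_cexp_mul_sub_integral {u : G → ℝ} {F : G → ℂ} (hF : Integrable F μ)
    (hu : Measurable u) (t : ℝ) :
    ∫ g, exp (I * t * u g) * F g ∂μ - ∫ g, F g ∂μ = ∫ g, (exp (I * t * u g) - 1) * F g ∂μ := by
  rw [sub_eq_iff_eq_add, ← integral_add (hF.cexp_sub_one_mul hu t) hF]
  simp only [sub_one_mul, sub_add_cancel]

lemma integrable_comp_of_norm_le_mul_sq [MeasurableSpace E] {x : E} (hf : Measurable f)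
    (hact : Measurable fun g => act g x) (hδ : Integrable (fun g => δ g ^ 4) μ)
    (hδ1 : ∀ g, 1 ≤ δ g) (hp : ∀ x, 0 ≤ p x) (hpact : ∀ g x, p (act g x) ≤ δ g * p x)
    (hN : 0 ≤ N) (hfI : ∀ x, ‖f x‖ ≤ N * p x ^ 2) : Integrable (fun g => f (act g x)) μ := by
  refine (hδ.const_mul (N * p x ^ 2)).mono' (hf.comp hact).aestronglyMeasurable
    (ae_of_all _ fun g => ?_)
  have := hp (act g x)
  have hδ2 : δ g ^ 2 ≤ δ g ^ 4 := pow_le_pow_right₀ (hδ1 g) (by norm_num)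
  calc ‖f (act g x)‖ ≤ N * (δ g * p x) ^ 2 := (hfI _).trans (by gcongr; exact hpact g x)
    _ = N * p x ^ 2 * δ g ^ 2 := by ring
    _ ≤ N * p x ^ 2 * δ g ^ 4 := by gcongr

lemma norm_integral_le_mul_integral {V : Type*} [NormedAddCommGroup V] [NormedSpace ℝ V]
    {F : G → V} {w : G → ℝ} {a : ℝ} (hw : Integrable w μ)
    (h : ∀ g, ‖F g‖ ≤ a * w g) : ‖∫ g, F g ∂μ‖ ≤ a * ∫ g, w g ∂μ :=
  (norm_integral_le_of_norm_le (hw.const_mul a) (ae_of_all _ h)).trans_eq (integral_const_mul a w)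

noncomputable def fourierPerturbation (μ : Measure G) (act : G → E → E) (ξ : E → ℝ) (t : ℝ)
    (f : E → ℂ) (x : E) : ℂ :=
  ∫ g, exp (I * t * ξ (act g x)) * f (act g x) ∂μ - ∫ g, f (act g x) ∂μ

lemma norm_fourierPerturbation_le (hK : 0 ≤ K) (hN : 0 ≤ N)
    (hδ : Integrable (fun g => δ g ^ 4) μ) (hp : ∀ x, 0 ≤ p x)
    (hpact : ∀ g x, p (act g x) ≤ δ g * p x) (hξ : ∀ x, |ξ x| ≤ K * p x ^ 2)
    (hfI : ∀ x, ‖f x‖ ≤ N * p x ^ 2) {x : E} (hF : Integrable (fun g => f (act g x)) μ)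
    (hu : Measurable fun g => ξ (act g x)) (t : ℝ) :
    ‖fourierPerturbation μ act ξ t f x‖ ≤ |t| * N * (∫ g, K * δ g ^ 4 ∂μ) * p x ^ 4 := by
  rw [fourierPerturbation, integral_cexp_mul_sub_integral hF hu]
  refine (norm_integral_le_mul_integral (a := |t| * N * p x ^ 4) (hδ.const_mul K)
    fun g => ?_).trans_eq (by ring)
  have hpg := hpact g x
  have := hp (act g x)
  calc _ ≤ |t| * |ξ (act g x)| * ‖f (act g x)‖ := norm_cexp_sub_one_mul_le _ _ _
    _ ≤ |t| * (K * (δ g * p x) ^ 2) * (N * (δ g * p x) ^ 2) := by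
        gcongr
        · exact (hξ _).trans (by gcongr)
        · exact (hfI _).trans (by gcongr)
    _ = _ := by ring

lemma norm_fourierPerturbation_sub_le [PseudoMetricSpace E] (hK : 0 ≤ K)
    (hL : 0 ≤ L) (hA : 0 ≤ A) (hM : 0 ≤ M) (hN : 0 ≤ N) (hp : ∀ x, 1 ≤ p x)
    (hc : ∀ g, 0 ≤ c g) (hcLip : ∀ g x y, dist (act g x) (act g y) ≤ c g * dist x y)
    (hpact : ∀ g x, p (act g x) ≤ δ g * p x) (hξ : ∀ x, |ξ x| ≤ K * p x ^ 2)
    (hξLip : ∀ x y, |ξ x - ξ y| ≤ L * dist x y) (hfI : ∀ x, ‖f x‖ ≤ N * p x ^ 2)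
    (hfM : ∀ x y, ‖f x - f y‖ ≤ M * (√(dist x y) * p x * p y))
    (hdist : ∀ x y, √(dist x y) ≤ A * (p x * p y))
    (hF : ∀ x, Integrable (fun g => f (act g x)) μ) (hu : ∀ x, Measurable fun g => ξ (act g x))
    (hcδ4 : Integrable (fun g => √(c g) * δ g ^ 4) μ)
    (hcδ2 : Integrable (fun g => c g * δ g ^ 2) μ) (t : ℝ) (x y : E) :
    ‖fourierPerturbation μ act ξ t f x - fourierPerturbation μ act ξ t f y‖
      ≤ |t| * (M + N) * (∫ g, K * (√(c g) * δ g ^ 4) + L * A * (c g * δ g ^ 2) ∂μ)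
        * (√(dist x y) * p x ^ 3 * p y ^ 3) := by
  rw [fourierPerturbation, fourierPerturbation, integral_cexp_mul_sub_integral (hF x) (hu x),
    integral_cexp_mul_sub_integral (hF y) (hu y),
    ← integral_sub ((hF x).cexp_sub_one_mul (hu x) t) ((hF y).cexp_sub_one_mul (hu y) t)]
  refine (norm_integral_le_mul_integral
    (w := fun g => K * (√(c g) * δ g ^ 4) + L * A * (c g * δ g ^ 2))
    ((hcδ4.const_mul K).add (hcδ2.const_mul (L * A)))
    fun g => norm_cexp_sub_one_mul_comp_sub_le hK hL hA hM hN hp hc hcLip hpact hξ hξLip hfI hfM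
      hdist t g x y).trans_eq (by ring)

theorem iSup₂_add_iSup_enorm_fourierPerturbation_le [PseudoMetricSpace E] [MeasurableSpace E]
    [OpensMeasurableSpace E] (hK : 0 ≤ K) (hL : 0 ≤ L) (hA : 0 ≤ A) (hM : 0 ≤ M) (hN : 0 ≤ N)
    (hp : ∀ x, 1 ≤ p x) (hpc : Continuous p) (hc : ∀ g, 0 ≤ c g) (hδ1 : ∀ g, 1 ≤ δ g)
    (hact : ∀ x, Measurable fun g => act g x)
    (hcLip : ∀ g x y, dist (act g x) (act g y) ≤ c g * dist x y)
    (hpact : ∀ g x, p (act g x) ≤ δ g * p x) (hξ : ∀ x, |ξ x| ≤ K * p x ^ 2)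
    (hξLip : ∀ x y, |ξ x - ξ y| ≤ L * dist x y) (hfI : ∀ x, ‖f x‖ ≤ N * p x ^ 2)
    (hfM : ∀ x y, ‖f x - f y‖ ≤ M * (√(dist x y) * p x * p y))
    (hdist : ∀ x y, √(dist x y) ≤ A * (p x * p y)) (hδ4 : Integrable (fun g => δ g ^ 4) μ)
    (hcδ4 : Integrable (fun g => √(c g) * δ g ^ 4) μ)
    (hcδ2 : Integrable (fun g => c g * δ g ^ 2) μ) (t : ℝ) :
    (⨆ (x) (y), (‖fourierPerturbation μ act ξ t f x - fourierPerturbation μ act ξ t f y‖₊ : ℝ≥0∞)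
        / ENNReal.ofReal (√(dist x y) * p x ^ 3 * p y ^ 3))
      + ⨆ x, (‖fourierPerturbation μ act ξ t f x‖₊ : ℝ≥0∞) / ENNReal.ofReal (p x ^ 4)
      ≤ ENNReal.ofReal (|t| * (M + N) * ((∫ g, K * (√(c g) * δ g ^ 4) + L * A * (c g * δ g ^ 2) ∂μ)
          + ∫ g, K * δ g ^ 4 ∂μ)) := by
  have hp0 (x : E) : 0 ≤ p x := zero_le_one.trans (hp x)
  have hξm : Measurable ξ := (LipschitzWith.of_dist_le' fun x y =>
    (Real.dist_eq _ _).trans_le (hξLip x y)).continuous.measurable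
  have hu (x : E) : Measurable fun g => ξ (act g x) := hξm.comp (hact x)
  have hF (x : E) : Integrable (fun g => f (act g x)) μ :=
    integrable_comp_of_norm_le_mul_sq (continuous_of_norm_sub_le_mul_sqrt_dist hpc hfM).measurable
      (hact x) hδ4 hδ1 hp0 hpact hN hfI
  have hMN : 0 ≤ |t| * (M + N) := by positivity
  rw [mul_add]
  refine iSup₂_add_iSup_enorm_div_ofReal_le
    (mul_nonneg hMN (integral_nonneg fun g => by have := hc g; positivity))
    (mul_nonneg hMN (integral_nonneg fun g => by positivity))
    (norm_fourierPerturbation_sub_le hK hL hA hM hN hp hc hcLip hpact hξ hξLip hfI hfM hdist hF hu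
      hcδ4 hcδ2 t) fun x => ?_
  refine (norm_fourierPerturbation_le hK hN hδ4 hp0 hpact hξ hfI (hF x) (hu x) t).trans ?_
  gcongr
  linarith

end Integral

theorem stmt_13_general
    {E : Type*} [MetricSpace E] [MeasurableSpace E] [BorelSpace E]
    (x₀ : E)
    -- the Lipschitz transformations of `E`
    {G : Type*} [MeasurableSpace G]
    (act : G → E → E) (hact : Measurable fun p : G × E => act p.1 p.2)
    (c : G → ℝ) (hc0 : ∀ g, 0 ≤ c g)
    (hcLip : ∀ g x y, dist (act g x) (act g y) ≤ c g * dist x y)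
    (π : Measure G)
    -- the Lipschitz function `ξ`, the kernel `Q` and the Fourier kernels `Q(t)`
    (ξ : E → ℝ) (C : ℝ) (hC : 0 ≤ C) (hξLip : ∀ x y, |ξ x - ξ y| ≤ C * dist x y)
    (Qop : (E → ℂ) → E → ℂ) (hQop : ∀ f x, Qop f x = ∫ g, f (act g x) ∂π)
    (Qt : ℝ → (E → ℂ) → E → ℂ)
    (hQt : ∀ t f x, Qt t f x = ∫ g, Complex.exp (Complex.I * t * ξ (act g x)) * f (act g x) ∂π)
    -- the weights `p_λ` and `δ_λ`
    (lam : ℝ) (hlam0 : 0 < lam)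
    (pl : E → ℝ) (hpl : ∀ x, pl x = 1 + lam * Real.sqrt (dist x x₀))
    (δ : G → ℝ) (hδ : ∀ g, δ g = Real.sqrt (max (c g) 1) + lam * Real.sqrt (dist (act g x₀) x₀))
    -- the seminorms `m_γ` and `|·|_γ` for `γ = 1, 3`
    (m1 : (E → ℂ) → ℝ≥0∞)
    (hm1 : ∀ f, m1 f = ⨆ (x : E) (y : E),
      (‖f x - f y‖₊ : ℝ≥0∞) / ENNReal.ofReal (Real.sqrt (dist x y) * pl x * pl y))
    (i1 : (E → ℂ) → ℝ≥0∞)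
    (hi1 : ∀ f, i1 f = ⨆ x : E, (‖f x‖₊ : ℝ≥0∞) / ENNReal.ofReal (pl x ^ 2))
    (m3 : (E → ℂ) → ℝ≥0∞)
    (hm3 : ∀ f, m3 f = ⨆ (x : E) (y : E),
      (‖f x - f y‖₊ : ℝ≥0∞) / ENNReal.ofReal (Real.sqrt (dist x y) * pl x ^ 3 * pl y ^ 3))
    (i3 : (E → ℂ) → ℝ≥0∞)
    (hi3 : ∀ f, i3 f = ⨆ x : E, (‖f x‖₊ : ℝ≥0∞) / ENNReal.ofReal (pl x ^ 4))
    -- the moment hypotheses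
    (h4 : Integrable (fun g => δ g ^ 4) π)
    (hc4 : Integrable (fun g => Real.sqrt (c g) * δ g ^ 4) π)
    (hc2 : Integrable (fun g => c g * δ g ^ 2) π) :
    ∃ E₀ > (0 : ℝ), ∀ f : E → ℂ, ∀ t : ℝ,
      m3 (fun x => Qt t f x - Qop f x) + i3 (fun x => Qt t f x - Qop f x)
        ≤ ENNReal.ofReal (E₀ * |t|) * (m1 f + i1 f) := by
  obtain rfl : pl = sqrtWeight lam x₀ := funext hpl
  have hδ1 (g : G) : 1 ≤ δ g :=
    hδ g ▸ le_add_of_le_of_nonneg (Real.one_le_sqrt.2 (le_max_right _ _)) (by positivity)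
  have hpact (g : G) (x : E) : sqrtWeight lam x₀ (act g x) ≤ δ g * sqrtWeight lam x₀ x :=
    hδ g ▸ sqrtWeight_map_le (hc0 g) hlam0.le (hcLip g) x₀ x
  set K := |ξ x₀| + C / lam ^ 2
  set Bm := ∫ g, K * (√(c g) * δ g ^ 4) + C * (2 / lam) * (c g * δ g ^ 2) ∂π
  set Bi := ∫ g, K * δ g ^ 4 ∂π
  have hK : 0 ≤ K := by positivity
  have hBm : 0 ≤ Bm := integral_nonneg fun g => by have := hc0 g; positivity
  have hBi : 0 ≤ Bi := integral_nonneg fun g => by positivity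
  refine ⟨Bm + Bi + 1, by positivity, fun f t => ?_⟩
  rcases eq_or_ne t 0 with rfl | ht
  · simp [hQt, hQop, hm3, hi3]
  refine le_ofReal_mul_add (by positivity) fun hmfin hifin => ?_
  have hp0 (x : E) : 0 ≤ sqrtWeight lam x₀ x := zero_le_one.trans (one_le_sqrtWeight hlam0.le x₀ x)
  have hfI (x : E) : ‖f x‖ ≤ (i1 f).toReal * sqrtWeight lam x₀ x ^ 2 :=
    norm_le_toReal_mul_of_enorm_div_le hifin (by positivity)
      (by rw [hi1]; exact le_iSup_of_le x le_rfl)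
  have hfM (x y : E) : ‖f x - f y‖
      ≤ (m1 f).toReal * (√(dist x y) * sqrtWeight lam x₀ x * sqrtWeight lam x₀ y) :=
    norm_le_toReal_mul_of_enorm_div_le hmfin (by have := hp0 x; have := hp0 y; positivity)
      (by rw [hm1]; exact le_iSup₂_of_le x y le_rfl)
  have hQ (x : E) : Qt t f x - Qop f x = fourierPerturbation π act ξ t f x := by
    rw [hQt, hQop, fourierPerturbation]
  simp only [hm3, hi3, hQ]
  refine (iSup₂_add_iSup_enorm_fourierPerturbation_le hK hC (by positivity) toReal_nonneg
    toReal_nonneg (one_le_sqrtWeight hlam0.le x₀) (continuous_sqrtWeight lam x₀) hc0 hδ1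
    (fun x => hact.comp measurable_prodMk_right) hcLip hpact
    (abs_le_mul_sqrtWeight_sq hC hlam0 hξLip x₀) hξLip hfI hfM
    (sqrt_dist_le_mul_sqrtWeight hlam0 x₀) h4 hc4 hc2 t).trans (ENNReal.ofReal_le_ofReal ?_)
  have : 0 ≤ |t| * ((m1 f).toReal + (i1 f).toReal) := by positivity
  nlinarith

/-- Lemma 3.3 of the paper: `‖Q(t)f − Qf‖₃ ≤ E₀ |t| ‖f‖₁` for every `f ∈ L₁` and `t ∈ ℝ`. -/
theorem stmt_13
    {E : Type*} [MetricSpace E] [MeasurableSpace E] [BorelSpace E]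
    (hballs : ∀ (x : E) (r : ℝ), IsCompact (Metric.closedBall x r))
    (x₀ : E)
    -- the Lipschitz transformations of `E`
    {G : Type*} [MeasurableSpace G]
    (act : G → E → E) (hact : Measurable fun p : G × E => act p.1 p.2)
    (c : G → ℝ) (hc0 : ∀ g, 0 ≤ c g)
    (hcLip : ∀ g x y, dist (act g x) (act g y) ≤ c g * dist x y)
    (hcLeast : ∀ g r, 0 ≤ r → (∀ x y, dist (act g x) (act g y) ≤ r * dist x y) → c g ≤ r)
    (π : Measure G) [IsProbabilityMeasure π]
    -- the Lipschitz function `ξ`, the kernel `Q` and the Fourier kernels `Q(t)`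
    (ξ : E → ℝ) (C : ℝ) (hC : 0 ≤ C) (hξLip : ∀ x y, |ξ x - ξ y| ≤ C * dist x y)
    (Qop : (E → ℂ) → E → ℂ) (hQop : ∀ f x, Qop f x = ∫ g, f (act g x) ∂π)
    (Qt : ℝ → (E → ℂ) → E → ℂ)
    (hQt : ∀ t f x, Qt t f x = ∫ g, Complex.exp (Complex.I * t * ξ (act g x)) * f (act g x) ∂π)
    -- the weights `p_λ` and `δ_λ`
    (lam : ℝ) (hlam0 : 0 < lam) (hlam1 : lam ≤ 1)
    (pl : E → ℝ) (hpl : ∀ x, pl x = 1 + lam * Real.sqrt (dist x x₀))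
    (δ : G → ℝ) (hδ : ∀ g, δ g = Real.sqrt (max (c g) 1) + lam * Real.sqrt (dist (act g x₀) x₀))
    -- the seminorms `m_γ` and `|·|_γ` for `γ = 1, 3`
    (m1 : (E → ℂ) → ℝ≥0∞)
    (hm1 : ∀ f, m1 f = ⨆ (x : E) (y : E),
      (‖f x - f y‖₊ : ℝ≥0∞) / ENNReal.ofReal (Real.sqrt (dist x y) * pl x * pl y))
    (i1 : (E → ℂ) → ℝ≥0∞)
    (hi1 : ∀ f, i1 f = ⨆ x : E, (‖f x‖₊ : ℝ≥0∞) / ENNReal.ofReal (pl x ^ 2))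
    (m3 : (E → ℂ) → ℝ≥0∞)
    (hm3 : ∀ f, m3 f = ⨆ (x : E) (y : E),
      (‖f x - f y‖₊ : ℝ≥0∞) / ENNReal.ofReal (Real.sqrt (dist x y) * pl x ^ 3 * pl y ^ 3))
    (i3 : (E → ℂ) → ℝ≥0∞)
    (hi3 : ∀ f, i3 f = ⨆ x : E, (‖f x‖₊ : ℝ≥0∞) / ENNReal.ofReal (pl x ^ 4))
    -- the moment hypotheses
    (h4 : Integrable (fun g => δ g ^ 4) π)
    (hc4 : Integrable (fun g => Real.sqrt (c g) * δ g ^ 4) π)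
    (hc2 : Integrable (fun g => c g * δ g ^ 2) π) :
    ∃ E₀ > (0 : ℝ), ∀ f : E → ℂ, ∀ t : ℝ,
      m3 (fun x => Qt t f x - Qop f x) + i3 (fun x => Qt t f x - Qop f x)
        ≤ ENNReal.ofReal (E₀ * |t|) * (m1 f + i1 f) :=
  stmt_13_general x₀ act hact c hc0 hcLip π ξ C hC hξLip Qop hQop Qt hQt lam hlam0 pl hpl δ hδ m1
    hm1 i1 hi1 m3 hm3 i3 hi3 h4 hc4 hc2
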